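/- arXiv:math/0607482 — 2 statements merged into one kernel-verified Lean document; each statement's English description precedes it below -/
import Mathlib

section
/- Let G be a solvable group. Then scl(g) = 0 for every g in the commutator subgroup [G,G], and every homogeneous quasimorphism on G is a group homomorphism. -/
open Filter
open scoped commutatorElement

/-- The commutator length of `g`. -/
noncomputable def commLength {G : Type*} [Group G] (g : G) : ℕ :=
  sInf {m : ℕ | ∃ a b : Fin m → G, g = (List.ofFn fun i => ⁅a i, b i⁆).prod}

/-- Stable commutator length. -/
noncomputable def scl {G : Type*} [Group G] (g : G) : ℝ :=
  Filter.liminf (fun n : ℕ => (commLength (g ^ n) : ℝ) / n) Filter.atTop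

/-- Homogeneous quasimorphism. -/
def IsHomQM {G : Type*} [Group G] (f : G → ℝ) : Prop :=
  (∀ (a : G) (n : ℤ), f (a ^ n) = n * f a) ∧
  BddAbove {d : ℝ | ∃ a b : G, d = |f a + f b - f (a * b)|}

noncomputable def defect {G : Type*} [Group G] (f : G → ℝ) : ℝ :=
  sSup {d : ℝ | ∃ a b : G, d = |f a + f b - f (a * b)|}

/-- Orientation-preserving piecewise-linear homeomorphism of [0,1]. -/
def IsPLplus (g : Equiv.Perm unitInterval) : Prop :=
  StrictMono (fun x : unitInterval => (g x : ℝ)) ∧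
  ∃ (k : ℕ) (x : Fin (k + 1) → ℝ), StrictMono x ∧ x 0 = 0 ∧ x (Fin.last k) = 1 ∧
    ∀ i : Fin k, ∃ a b : ℝ, ∀ t : unitInterval,
      x i.castSucc ≤ (t : ℝ) → (t : ℝ) ≤ x i.succ → (g t : ℝ) = a * (t : ℝ) + b

/-!
Let `A = ⁅H, H⁆` be an abelian normal subgroup of `G`. For `g ∈ [G, G]`, write `gⁿ = W u` where `W`
lifts a shortest product of commutators equal to `ḡⁿ` in `G ⧸ A` and `u ∈ A`. Since `A` is abelian,
`(W u)ᵏ = Wᵏ ⁅W⁻¹, y⁆ uᵏ` for some `y ∈ A`, and `uᵏ` is a product of boundedly many commutators,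
uniformly in `k`. Thus `cl (g^(n k)) ≤ k cl (ḡⁿ) + O(1)`, so `scl g ≤ scl ḡ`, and induction on the
derived length makes `scl` vanish on `[G, G]`.

A homogeneous quasimorphism `f` with defect `D` satisfies `|f g| ≤ 4 D scl g` on `[G, G]`, so `f`
vanishes there; since `(a b)ⁿ (aⁿ bⁿ)⁻¹ ∈ [G, G]`, the defect of `f` on `(a, b)` is then at most
`2 D / n` for every `n`.
-/

open scoped Topology

section CommutatorProducts

variable {G : Type*} [Group G]

def commProd (l : List (G × G)) : G :=
  (l.map fun p => ⁅p.1, p.2⁆).prod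

@[simp]
theorem commProd_nil : commProd ([] : List (G × G)) = 1 :=
  rfl

@[simp]
theorem commProd_cons (p : G × G) (l : List (G × G)) :
    commProd (p :: l) = ⁅p.1, p.2⁆ * commProd l :=
  List.prod_cons

@[simp]
theorem commProd_append (l₁ l₂ : List (G × G)) :
    commProd (l₁ ++ l₂) = commProd l₁ * commProd l₂ := by
  simp [commProd]

theorem map_commProd {Q : Type*} [Group Q] (φ : G →* Q) (l : List (G × G)) :
    φ (commProd l) = commProd (l.map (Prod.map φ φ)) := by
  induction l with
  | nil => simp
  | cons p l ih => simp [ih, map_commutatorElement]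

theorem commProd_mem {K : Subgroup G} {l : List (G × G)} (hl : ∀ p ∈ l, ⁅p.1, p.2⁆ ∈ K) :
    commProd l ∈ K :=
  list_prod_mem (List.forall_mem_map.mpr hl)

theorem commutatorElement_mem_commutator (a b : G) : ⁅a, b⁆ ∈ commutator G :=
  Subgroup.commutator_mem_commutator (Subgroup.mem_top a) (Subgroup.mem_top b)

theorem commProd_mem_commutator (l : List (G × G)) : commProd l ∈ commutator G :=
  commProd_mem fun p _ => commutatorElement_mem_commutator p.1 p.2

theorem exists_commProd_eq_of_mem_commutator {H : Subgroup G} {g : G} (hg : g ∈ ⁅H, H⁆) :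
    ∃ l : List (G × G), (∀ p ∈ l, p.1 ∈ H ∧ p.2 ∈ H) ∧ commProd l = g := by
  rw [Subgroup.commutator_def] at hg
  induction hg using Subgroup.closure_induction'' with
  | mem _ hx =>
    obtain ⟨a, ha, b, hb, rfl⟩ := hx
    exact ⟨[(a, b)], by simp [ha, hb], by simp⟩
  | inv_mem _ hx =>
    obtain ⟨a, ha, b, hb, rfl⟩ := hx
    exact ⟨[(b, a)], by simp [ha, hb], by simp [commutatorElement_inv]⟩
  | one => exact ⟨[], by simp, rfl⟩
  | mul _ _ _ _ ihx ihy =>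
    obtain ⟨l₁, h₁, rfl⟩ := ihx
    obtain ⟨l₂, h₂, rfl⟩ := ihy
    refine ⟨l₁ ++ l₂, fun p hp => ?_, commProd_append l₁ l₂⟩
    exact (List.mem_append.mp hp).elim (h₁ p) (h₂ p)

theorem map_mem_commutator {Q : Type*} [Group Q] (φ : G →* Q) {g : G} (hg : g ∈ commutator G) :
    φ g ∈ commutator Q := by
  obtain ⟨l, -, rfl⟩ := exists_commProd_eq_of_mem_commutator (H := ⊤) hg
  rw [map_commProd]
  exact commProd_mem_commutator _

end CommutatorProducts

section CommLength

variable {G : Type*} [Group G] {g h : G}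

theorem commLength_eq_sInf (g : G) :
    commLength g = sInf {m | ∃ l : List (G × G), l.length = m ∧ commProd l = g} := by
  unfold commLength
  congr
  ext m
  constructor
  · rintro ⟨a, b, rfl⟩
    exact ⟨List.ofFn fun i => (a i, b i), by simp, by simp [commProd, List.map_ofFn]; rfl⟩
  · rintro ⟨l, rfl, rfl⟩
    refine ⟨fun i => l[i].1, fun i => l[i].2, ?_⟩
    conv_lhs => rw [commProd, ← List.ofFn_getElem (xs := l), List.map_ofFn]
    rfl

theorem commLength_le_length {l : List (G × G)} (hl : commProd l = g) :
    commLength g ≤ l.length := by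
  rw [commLength_eq_sInf]
  exact Nat.sInf_le ⟨l, rfl, hl⟩

theorem exists_commProd_eq_of_commLength (hg : g ∈ commutator G) :
    ∃ l : List (G × G), l.length = commLength g ∧ commProd l = g := by
  rw [commLength_eq_sInf]
  obtain ⟨l, -, hl⟩ := exists_commProd_eq_of_mem_commutator (H := ⊤) hg
  exact Nat.sInf_mem (s := {m | ∃ l : List (G × G), l.length = m ∧ commProd l = g}) ⟨_, l, rfl, hl⟩

@[simp]
theorem commLength_one : commLength (1 : G) = 0 :=
  Nat.le_zero.mp (commLength_le_length (l := []) rfl)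

theorem commLength_mul_le (hg : g ∈ commutator G) (hh : h ∈ commutator G) :
    commLength (g * h) ≤ commLength g + commLength h := by
  obtain ⟨l₁, hl₁, rfl⟩ := exists_commProd_eq_of_commLength hg
  obtain ⟨l₂, hl₂, rfl⟩ := exists_commProd_eq_of_commLength hh
  simpa [← hl₁, ← hl₂] using commLength_le_length (commProd_append l₁ l₂)

theorem commLength_pow_le (hg : g ∈ commutator G) (k : ℕ) :
    commLength (g ^ k) ≤ k * commLength g := by
  induction k with
  | zero => simp
  | succ k ih =>
    calc commLength (g ^ (k + 1)) ≤ commLength (g ^ k) + commLength g := by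
          rw [pow_succ]; exact commLength_mul_le (pow_mem hg k) hg
      _ ≤ (k + 1) * commLength g := by rw [add_mul, one_mul]; exact Nat.add_le_add_right ih _

theorem exists_map_eq_commLength_le {Q : Type*} [Group Q] {φ : G →* Q}
    (hφ : Function.Surjective φ) {q : Q} (hq : q ∈ commutator Q) :
    ∃ x ∈ commutator G, φ x = q ∧ commLength x ≤ commLength q := by
  obtain ⟨l, hl, rfl⟩ := exists_commProd_eq_of_commLength hq
  set lift := l.map (Prod.map (Function.surjInv hφ) (Function.surjInv hφ))
  refine ⟨commProd lift, commProd_mem_commutator lift, ?_, ?_⟩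
  · rw [map_commProd, List.map_map]
    congr
    conv_rhs => rw [← List.map_id l]
    congr
    ext p <;> simp [Function.surjInv_eq hφ]
  · exact hl ▸ (commLength_le_length rfl).trans (by simp [lift])

end CommLength

section AbelianNormalSubgroup

variable {G : Type*} [Group G] {N : Subgroup G}

theorem commute_of_commutator_eq_bot (hN : ⁅N, N⁆ = ⊥) {x y : G} (hx : x ∈ N) (hy : y ∈ N) :
    Commute x y :=
  commutatorElement_eq_one_iff_commute.mp <| by
    simpa [hN] using Subgroup.commutator_mem_commutator hx hy

theorem commutatorElement_mem_of_mem_right [N.Normal] (w : G) {y : G} (hy : y ∈ N) :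
    ⁅w, y⁆ ∈ N :=
  Subgroup.commutator_le_right ⊤ N (Subgroup.commutator_mem_commutator (Subgroup.mem_top w) hy)

variable [N.Normal] (hN : ⁅N, N⁆ = ⊥)
include hN

theorem commutatorElement_mul_right_of_mem (w : G) {x y : G} (hx : x ∈ N) (hy : y ∈ N) :
    ⁅w, x * y⁆ = ⁅w, x⁆ * ⁅w, y⁆ := by
  have hwy : ⁅w, y⁆ ∈ N := commutatorElement_mem_of_mem_right w hy
  calc ⁅w, x * y⁆ = ⁅w, x⁆ * (x * ⁅w, y⁆ * x⁻¹) := by group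
    _ = ⁅w, x⁆ * ⁅w, y⁆ := by rw [(commute_of_commutator_eq_bot hN hx hwy).eq, mul_inv_cancel_right]

theorem exists_mul_pow_eq_pow_mul_commutatorElement (w : G) {u : G} (hu : u ∈ N) (k : ℕ) :
    ∃ y ∈ N, (w * u) ^ k = w ^ k * ⁅w⁻¹, y⁆ * u ^ k := by
  induction k with
  | zero => exact ⟨1, one_mem N, by simp⟩
  | succ k ih =>
    obtain ⟨y, hy, hk⟩ := ih
    have hx : ⁅w⁻¹, y⁆ * u ^ k ∈ N :=
      mul_mem (commutatorElement_mem_of_mem_right w⁻¹ hy) (pow_mem hu k)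
    -- `(w u)^(k+1) = w^(k+1) ⁅w⁻¹, x⁆ ⁅w⁻¹, y⁆ u^(k+1)` with `x = ⁅w⁻¹, y⁆ uᵏ`
    refine ⟨⁅w⁻¹, y⁆ * u ^ k * y, mul_mem hx hy, ?_⟩
    rw [commutatorElement_mul_right_of_mem hN _ hx hy, pow_succ, hk]
    group

theorem exists_commutatorElement_pow_eq {a b : G} (hab : ⁅a, b⁆ ∈ N) (k : ℕ) :
    ∃ y : G, ⁅a, b⁆ ^ k = ⁅y, a⁆ * ⁅a ^ k, b⁆ := by
  obtain ⟨y, -, hy⟩ := exists_mul_pow_eq_pow_mul_commutatorElement hN a⁻¹ hab k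
  refine ⟨y, ?_⟩
  rw [show a⁻¹ * ⁅a, b⁆ = b * a⁻¹ * b⁻¹ by group, conj_pow, inv_inv] at hy
  calc ⁅a, b⁆ ^ k = (a⁻¹ ^ k * ⁅a, y⁆)⁻¹ * (b * a⁻¹ ^ k * b⁻¹) := by rw [hy]; group
    _ = ⁅y, a⁆ * ⁅a ^ k, b⁆ := by group

theorem commLength_commProd_pow_le {l : List (G × G)} (hl : ∀ p ∈ l, ⁅p.1, p.2⁆ ∈ N) (k : ℕ) :
    commLength (commProd l ^ k) ≤ 2 * l.length := by
  induction l with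
  | nil => simp
  | cons p l ih =>
    have hl' : ∀ q ∈ l, ⁅q.1, q.2⁆ ∈ N := fun q hq => hl q (List.mem_cons_of_mem p hq)
    have hp : ⁅p.1, p.2⁆ ∈ N := hl p List.mem_cons_self
    obtain ⟨y, hy⟩ := exists_commutatorElement_pow_eq hN hp k
    have hy' : ⁅p.1, p.2⁆ ^ k = commProd [(y, p.1), (p.1 ^ k, p.2)] := by simp [hy]
    rw [commProd_cons, (commute_of_commutator_eq_bot hN hp (commProd_mem hl')).mul_pow, hy']
    calc commLength (commProd [(y, p.1), (p.1 ^ k, p.2)] * commProd l ^ k)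
        ≤ commLength (commProd [(y, p.1), (p.1 ^ k, p.2)]) + commLength (commProd l ^ k) :=
          commLength_mul_le (commProd_mem_commutator _) (pow_mem (commProd_mem_commutator l) k)
      _ ≤ 2 + 2 * l.length := Nat.add_le_add (commLength_le_length rfl) (ih hl')
      _ = 2 * (p :: l).length := by simp only [List.length_cons]; ring

end AbelianNormalSubgroup

section StableCommutatorLength

variable {G : Type*} [Group G] {g : G}

theorem subadditive_commLength_pow (hg : g ∈ commutator G) :
    Subadditive fun n => (commLength (g ^ n) : ℝ) := fun m n => by
  simp only [pow_add]
  exact_mod_cast commLength_mul_le (pow_mem hg m) (pow_mem hg n)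

theorem bddBelow_commLength_pow_div (g : G) :
    BddBelow (Set.range fun n : ℕ => (commLength (g ^ n) : ℝ) / n) :=
  ⟨0, by rintro _ ⟨n, rfl⟩; positivity⟩

theorem scl_eq_lim (hg : g ∈ commutator G) : scl g = (subadditive_commLength_pow hg).lim :=
  ((subadditive_commLength_pow hg).tendsto_lim (bddBelow_commLength_pow_div g)).liminf_eq

theorem tendsto_commLength_pow_div_scl (hg : g ∈ commutator G) :
    Tendsto (fun n : ℕ => (commLength (g ^ n) : ℝ) / n) atTop (𝓝 (scl g)) :=
  scl_eq_lim hg ▸ (subadditive_commLength_pow hg).tendsto_lim (bddBelow_commLength_pow_div g)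

theorem scl_le_commLength_pow_div (hg : g ∈ commutator G) {n : ℕ} (hn : n ≠ 0) :
    scl g ≤ commLength (g ^ n) / n :=
  scl_eq_lim hg ▸ (subadditive_commLength_pow hg).lim_le_div (bddBelow_commLength_pow_div g) hn

theorem scl_nonneg (hg : g ∈ commutator G) : 0 ≤ scl g :=
  ge_of_tendsto' (tendsto_commLength_pow_div_scl hg) fun _ => by positivity

@[simp]
theorem scl_one : scl (1 : G) = 0 := by
  simp [scl]

end StableCommutatorLength

section QuotientByAbelianCommutator

variable {G : Type*} [Group G] {H : Subgroup G} [H.Normal] (hH : ⁅⁅H, H⁆, ⁅H, H⁆⁆ = ⊥)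
include hH

theorem exists_commLength_pow_le_of_mem_commutator {u : G} (hu : u ∈ ⁅H, H⁆) :
    ∃ C, ∀ k, commLength (u ^ k) ≤ C := by
  obtain ⟨l, hl, rfl⟩ := exists_commProd_eq_of_mem_commutator hu
  exact ⟨2 * l.length, commLength_commProd_pow_le hH
    fun p hp => Subgroup.commutator_mem_commutator (hl p hp).1 (hl p hp).2⟩

theorem exists_commLength_pow_mul_le {g : G} (hg : g ∈ commutator G) (n : ℕ) :
    ∃ C : ℕ, ∀ k, commLength (g ^ (n * k)) ≤ k * commLength ((g : G ⧸ ⁅H, H⁆) ^ n) + C := by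
  obtain ⟨W, hW, hWg, hWl⟩ := exists_map_eq_commLength_le (QuotientGroup.mk'_surjective ⁅H, H⁆)
    (pow_mem (map_mem_commutator (QuotientGroup.mk' ⁅H, H⁆) hg) n)
  set u := W⁻¹ * g ^ n
  have hu : u ∈ ⁅H, H⁆ := QuotientGroup.eq.mp (by simpa using hWg)
  have hWu : g ^ n = W * u := by simp [u]
  obtain ⟨C, hC⟩ := exists_commLength_pow_le_of_mem_commutator hH hu
  refine ⟨1 + C, fun k => ?_⟩
  obtain ⟨y, -, hy⟩ := exists_mul_pow_eq_pow_mul_commutatorElement hH W hu k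
  have huk : u ^ k ∈ commutator G := pow_mem (Subgroup.commutator_mono le_top le_top hu) k
  have hWy := commutatorElement_mem_commutator W⁻¹ y
  rw [pow_mul, hWu, hy]
  calc commLength (W ^ k * ⁅W⁻¹, y⁆ * u ^ k)
      ≤ commLength (W ^ k) + commLength ⁅W⁻¹, y⁆ + commLength (u ^ k) :=
        (commLength_mul_le (mul_mem (pow_mem hW k) hWy) huk).trans
          (Nat.add_le_add_right (commLength_mul_le (pow_mem hW k) hWy) _)
    _ ≤ k * commLength ((g : G ⧸ ⁅H, H⁆) ^ n) + 1 + C := by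
        gcongr
        · exact (commLength_pow_le hW k).trans (Nat.mul_le_mul_left k hWl)
        · exact commLength_le_length (l := [(W⁻¹, y)]) (by simp)
        · exact hC k
    _ = _ := by ring

theorem scl_le_commLength_mk_pow_div {g : G} (hg : g ∈ commutator G) {n : ℕ} (hn : n ≠ 0) :
    scl g ≤ commLength ((g : G ⧸ ⁅H, H⁆) ^ n) / n := by
  obtain ⟨C, hC⟩ := exists_commLength_pow_mul_le hH hg n
  set c : ℝ := (commLength ((g : G ⧸ ⁅H, H⁆) ^ n) : ℝ) with hc
  have hlim : Tendsto (fun k : ℕ => c / n + C / n / k) atTop (𝓝 (c / n)) := by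
    simpa using tendsto_const_nhds.add (tendsto_const_div_atTop_nhds_zero_nat ((C : ℝ) / n))
  refine ge_of_tendsto hlim ((eventually_ne_atTop 0).mono fun k hk => ?_)
  calc scl g ≤ commLength (g ^ (n * k)) / (n * k : ℕ) :=
        scl_le_commLength_pow_div hg (by positivity)
    _ ≤ (k * c + C) / (n * k) := by push_cast; gcongr; rw [hc]; exact_mod_cast hC k
    _ = c / n + C / n / k := by field_simp

theorem scl_le_scl_mk {g : G} (hg : g ∈ commutator G) : scl g ≤ scl (g : G ⧸ ⁅H, H⁆) :=
  ge_of_tendsto (tendsto_commLength_pow_div_scl (map_mem_commutator (QuotientGroup.mk' _) hg))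
    ((eventually_ne_atTop 0).mono fun _ hn => scl_le_commLength_mk_pow_div hH hg hn)

end QuotientByAbelianCommutator

theorem scl_eq_zero_of_derivedSeries_eq_bot {G : Type*} [Group G] (j : ℕ)
    (hj : derivedSeries G (j + 1) = ⊥) {g : G} (hg : g ∈ commutator G) : scl g = 0 := by
  induction j generalizing G with
  | zero =>
    rw [derivedSeries_one] at hj
    rw [hj, Subgroup.mem_bot] at hg
    rw [hg, scl_one]
  | succ j ih =>
    have hquot : derivedSeries (G ⧸ derivedSeries G (j + 1)) (j + 1) = ⊥ := by
      rw [← map_derivedSeries_eq (QuotientGroup.mk'_surjective _), Subgroup.map_eq_bot_iff,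
        QuotientGroup.ker_mk']
    refine le_antisymm ?_ (scl_nonneg hg)
    calc scl g ≤ scl (g : G ⧸ derivedSeries G (j + 1)) :=
          scl_le_scl_mk (H := derivedSeries G j) hj hg
      _ = 0 := ih hquot (map_mem_commutator (QuotientGroup.mk' _) hg)

namespace IsHomQM

variable {G : Type*} [Group G] {f : G → ℝ} (hf : IsHomQM f)
include hf

theorem map_pow (a : G) (n : ℕ) : f (a ^ n) = n * f a := by
  simpa using hf.1 a n

theorem map_one : f 1 = 0 := by
  simpa using hf.map_pow 1 0

theorem map_inv (a : G) : f a⁻¹ = -f a := by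
  simpa using hf.1 a (-1)

theorem abs_add_sub_map_mul_le (a b : G) : |f a + f b - f (a * b)| ≤ defect f :=
  le_csSup hf.2 ⟨a, b, rfl⟩

theorem abs_map_commutatorElement_le (a b : G) : |f ⁅a, b⁆| ≤ 3 * defect f := by
  have h₁ := hf.abs_add_sub_map_mul_le (a * b) (a⁻¹ * b⁻¹)
  have h₂ := hf.abs_add_sub_map_mul_le a b
  have h₃ := hf.abs_add_sub_map_mul_le a⁻¹ b⁻¹
  rw [show a * b * (a⁻¹ * b⁻¹) = ⁅a, b⁆ by group, hf.map_inv, hf.map_inv] at *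
  rw [abs_le] at *
  constructor <;> linarith

theorem abs_map_commProd_le (l : List (G × G)) : |f (commProd l)| ≤ 4 * l.length * defect f := by
  induction l with
  | nil => simp [hf.map_one]
  | cons p l ih =>
    have h₁ := hf.abs_add_sub_map_mul_le ⁅p.1, p.2⁆ (commProd l)
    have h₂ := hf.abs_map_commutatorElement_le p.1 p.2
    rw [commProd_cons, List.length_cons, Nat.cast_succ]
    rw [abs_le] at *
    constructor <;> linarith

theorem abs_map_le_commLength {g : G} (hg : g ∈ commutator G) :
    |f g| ≤ 4 * defect f * commLength g := by
  obtain ⟨l, hl, rfl⟩ := exists_commProd_eq_of_commLength hg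
  simpa [← hl, mul_assoc, mul_comm (l.length : ℝ)] using hf.abs_map_commProd_le l

theorem abs_map_le_scl {g : G} (hg : g ∈ commutator G) : |f g| ≤ 4 * defect f * scl g := by
  refine ge_of_tendsto ((tendsto_commLength_pow_div_scl hg).const_mul (4 * defect f))
    ((eventually_ne_atTop 0).mono fun n hn => ?_)
  have h := hf.abs_map_le_commLength (pow_mem hg n)
  rw [hf.map_pow, abs_mul, Nat.abs_cast] at h
  rw [mul_div_assoc', le_div_iff₀ (by positivity)]
  linarith

theorem map_mul_of_forall_mem_commutator (h₀ : ∀ g ∈ commutator G, f g = 0) (a b : G) :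
    f (a * b) = f a + f b := by
  have hbound : ∀ n : ℕ, n ≠ 0 → |f (a * b) - (f a + f b)| ≤ 2 * defect f / n := fun n hn => by
    have hz : (a * b) ^ n * (a ^ n * b ^ n)⁻¹ ∈ commutator G := by
      rw [← Abelianization.ker_of, MonoidHom.mem_ker]
      simp [mul_pow]
    have h₁ := hf.abs_add_sub_map_mul_le ((a * b) ^ n * (a ^ n * b ^ n)⁻¹) (a ^ n * b ^ n)
    have h₂ := hf.abs_add_sub_map_mul_le (a ^ n) (b ^ n)
    rw [inv_mul_cancel_right, h₀ _ hz, hf.map_pow] at h₁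
    rw [hf.map_pow, hf.map_pow] at h₂
    rw [le_div_iff₀ (by positivity), ← Nat.abs_cast n, ← abs_mul, abs_le]
    rw [abs_le] at h₁ h₂
    constructor <;> linarith
  have h := ge_of_tendsto (tendsto_const_div_atTop_nhds_zero_nat (2 * defect f))
    ((eventually_ne_atTop 0).mono hbound)
  linarith [abs_nonpos_iff.mp h]

end IsHomQM

/-- In a solvable group, scl vanishes on the commutator subgroup and every homogeneous
quasimorphism is a homomorphism. -/
theorem scl_eq_zero_of_solvable (G : Type*) [Group G] (hsolv : IsSolvable G) :
    (∀ g ∈ commutator G, scl g = 0) ∧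
      (∀ f : G → ℝ, IsHomQM f → ∀ a b : G, f (a * b) = f a + f b) := by
  obtain ⟨j, hj⟩ := hsolv.solvable
  have hscl : ∀ g ∈ commutator G, scl g = 0 := fun g hg =>
    scl_eq_zero_of_derivedSeries_eq_bot j
      (le_bot_iff.mp (hj ▸ derivedSeries_antitone G j.le_succ)) hg
  refine ⟨hscl, fun f hf => hf.map_mul_of_forall_mem_commutator fun g hg => ?_⟩
  simpa [hscl g hg] using hf.abs_map_le_scl hg
end

section
/- Let G be a subgroup of PL⁺(I) whose common fixed set fix(G) = {x ∈ [0,1] : g(x) = x for all g ∈ G} equals {0,1}, and let G₀ be the subgroup of G consisting of those elements that pointwise fix a neighborhood of 0 and a neighborhood of 1 in [0,1]. Then for every g in the commutator subgroup [G₀,G₀], the stable commutator length of g computed in G is zero. -/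
/-!
Write `G_δ` for the elements of `G` fixing `[0, δ] ∪ [1 - δ, 1]` pointwise. An element `g` of
`[G₀, G₀]` is a product of `m` commutators of elements of a single `G_δ`. Since
`fix(G) = {0, 1}`, the infimum of the `G`-orbit of `1 - δ` is `0`, so some `t ∈ G` maps
`[0, 1 - δ]` into `[0, δ)`; then `G_δ` commutes elementwise with every `tᵏ G_δ t⁻ᵏ`, `k ≥ 1`.
Consequently `φₙ(x) = ∏_{i=1}^{n} tⁱ x t⁻ⁱ` is a homomorphism on `G_δ`, and
`gⁿ = [aₙ, t] φₙ(g)` with `aₙ = ∏_{i<n} (tⁱ g t⁻ⁱ)^{n-i}`. Hence `cl(gⁿ) ≤ m + 1` for every `n`.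
-/

open Filter
open scoped commutatorElement

/-- The subgroup $G_0$ of a group $G$ of homeomorphisms of $[0,1]$ consisting of the
elements that pointwise fix a neighborhood of $0$ and a neighborhood of $1$. -/
def fixesEndNbhds (G : Subgroup (Equiv.Perm unitInterval)) : Subgroup G where
  carrier := {g : G | ∃ δ > 0, ∀ t : unitInterval,
    ((t : ℝ) ≤ δ → (g : Equiv.Perm unitInterval) t = t) ∧
    (1 - δ ≤ (t : ℝ) → (g : Equiv.Perm unitInterval) t = t)}
  one_mem' := ⟨1, one_pos, fun t => ⟨fun _ => rfl, fun _ => rfl⟩⟩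
  mul_mem' := by
    rintro a b ⟨δ₁, hδ₁, h₁⟩ ⟨δ₂, hδ₂, h₂⟩
    refine ⟨min δ₁ δ₂, lt_min hδ₁ hδ₂, fun t => ⟨fun ht => ?_, fun ht => ?_⟩⟩
    · have hb := (h₂ t).1 (le_trans ht (min_le_right δ₁ δ₂))
      have ha := (h₁ t).1 (le_trans ht (min_le_left δ₁ δ₂))
      simp [Equiv.Perm.mul_apply, hb, ha]
    · have hb := (h₂ t).2 (by linarith [min_le_right δ₁ δ₂])
      have ha := (h₁ t).2 (by linarith [min_le_left δ₁ δ₂])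
      simp [Equiv.Perm.mul_apply, hb, ha]
  inv_mem' := by
    rintro a ⟨δ, hδ, h⟩
    refine ⟨δ, hδ, fun t => ⟨fun ht => ?_, fun ht => ?_⟩⟩
    · exact (a : Equiv.Perm unitInterval).injective (by simp [(h t).1 ht])
    · exact (a : Equiv.Perm unitInterval).injective (by simp [(h t).2 ht])


open scoped Pointwise

section CommutatorProducts

variable {G : Type*} [Group G]

theorem commLength_le_length_s17 {g : G} {L : List (G × G)}
    (h : g = (L.map fun p => ⁅p.1, p.2⁆).prod) : commLength g ≤ L.length := by
  refine Nat.sInf_le ⟨fun i => (L.get i).1, fun i => (L.get i).2, ?_⟩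
  rw [h, ← List.ofFn_get L, List.map_ofFn]
  simp [Function.comp_def]

theorem exists_list_of_mem_commutator {g : G} (hg : g ∈ commutator G) :
    ∃ L : List (G × G), g = (L.map fun p => ⁅p.1, p.2⁆).prod := by
  rw [commutator_eq_closure] at hg
  induction hg using Subgroup.closure_induction'' with
  | mem x hx =>
    obtain ⟨a, b, rfl⟩ := hx
    exact ⟨[(a, b)], by simp⟩
  | inv_mem x hx =>
    obtain ⟨a, b, rfl⟩ := hx
    exact ⟨[(b, a)], by simp [commutatorElement_inv]⟩
  | one => exact ⟨[], rfl⟩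
  | mul x y _ _ hx hy =>
    obtain ⟨L₁, rfl⟩ := hx
    obtain ⟨L₂, rfl⟩ := hy
    exact ⟨L₁ ++ L₂, by simp⟩

theorem commLength_commutator_mul_map_le {K : Type*} [Group K] (f : K →* G) (a b : G)
    (L : List (K × K)) :
    commLength (⁅a, b⁆ * f (L.map fun p => ⁅p.1, p.2⁆).prod) ≤ L.length + 1 := by
  refine (commLength_le_length_s17 (L := (a, b) :: L.map (Prod.map f f)) ?_).trans (by simp)
  simp [map_list_prod, map_commutatorElement, Function.comp_def]

theorem scl_eq_zero_of_commLength_pow_le {g : G} {C : ℕ} (h : ∀ n, commLength (g ^ n) ≤ C) :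
    scl g = 0 := by
  refine Tendsto.liminf_eq (squeeze_zero (fun n => by positivity) (fun n => ?_)
    (tendsto_const_div_atTop_nhds_zero_nat (C : ℝ)))
  exact div_le_div_of_nonneg_right (by exact_mod_cast h n) n.cast_nonneg

theorem Subgroup.exists_mem_commutator_of_mem_commutator_iSup {ι : Type*} [Nonempty ι]
    [Preorder ι] [IsDirected ι (· ≤ ·)] {K : ι → Subgroup G} (hK : Monotone K) {g : G}
    (hg : g ∈ ⁅⨆ i, K i, ⨆ i, K i⁆) : ∃ i, g ∈ ⁅K i, K i⁆ := by
  have hcomm : Monotone fun i => ⁅K i, K i⁆ := fun _ _ h => commutator_mono (hK h) (hK h)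
  rw [← mem_iSup_of_directed hcomm.directed_le]
  refine commutator_le.2 (fun x hx y hy => ?_) hg
  obtain ⟨i, hi⟩ := (mem_iSup_of_directed hK.directed_le).1 hx
  obtain ⟨j, hj⟩ := (mem_iSup_of_directed hK.directed_le).1 hy
  obtain ⟨k, hik, hjk⟩ := directed_of (· ≤ ·) i j
  exact mem_iSup_of_mem k (commutator_mem_commutator (hK hik hi) (hK hjk hj))

end CommutatorProducts

section PosConjugates

variable {H : Type*} [Group H] {K : Subgroup H} {t : H}

def PosConjugatesCommute (K : Subgroup H) (t : H) : Prop :=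
  ∀ x ∈ K, ∀ y ∈ K, ∀ k : ℕ, Commute x (t ^ (k + 1) * y * (t ^ (k + 1))⁻¹)

/-- `conjPowProd t n x = ∏_{i=1}^{n} tⁱ x t⁻ⁱ`, the factors in increasing order of `i`. -/
def conjPowProd (t : H) : ℕ → H → H
  | 0, _ => 1
  | n + 1, x => t * (x * conjPowProd t n x) * t⁻¹

theorem PosConjugatesCommute.commute_conj_inv_pow_conjPowProd (hK : PosConjugatesCommute K t)
    {x y : H} (hx : x ∈ K) (hy : y ∈ K) (n : ℕ) :
    ∀ j : ℕ, Commute ((t ^ j)⁻¹ * y * t ^ j) (conjPowProd t n x) := by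
  induction n with
  | zero => exact fun _ => Commute.one_right _
  | succ n ih =>
    intro j
    have hyx : Commute ((t ^ (j + 1))⁻¹ * y * t ^ (j + 1)) x := by
      rw [← Commute.conj_iff (t ^ (j + 1))]
      simpa only [mul_assoc, mul_inv_cancel_left, mul_inv_cancel, mul_one] using hK y hy x hx j
    have hy' : t⁻¹ * ((t ^ j)⁻¹ * y * t ^ j) * t⁻¹⁻¹ = (t ^ (j + 1))⁻¹ * y * t ^ (j + 1) := by
      group
    have hP : t⁻¹ * conjPowProd t (n + 1) x * t⁻¹⁻¹ = x * conjPowProd t n x := by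
      simp only [conjPowProd]; group
    rw [← Commute.conj_iff t⁻¹, hy', hP]
    exact hyx.mul_right (ih (j + 1))

theorem PosConjugatesCommute.commute_conjPowProd (hK : PosConjugatesCommute K t) {x y : H}
    (hx : x ∈ K) (hy : y ∈ K) (n : ℕ) : Commute y (conjPowProd t n x) := by
  simpa using hK.commute_conj_inv_pow_conjPowProd hx hy n 0

theorem conjPowProd_one (t : H) (n : ℕ) : conjPowProd t n 1 = 1 := by
  induction n with
  | zero => rfl
  | succ n ih => simp [conjPowProd, ih]

theorem PosConjugatesCommute.conjPowProd_mul (hK : PosConjugatesCommute K t) {x y : H}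
    (hx : x ∈ K) (hy : y ∈ K) (n : ℕ) :
    conjPowProd t n (x * y) = conjPowProd t n x * conjPowProd t n y := by
  induction n with
  | zero => simp [conjPowProd]
  | succ n ih =>
    simp only [conjPowProd, ih]
    rw [mul_assoc x y, ← mul_assoc y, (hK.commute_conjPowProd hx hy n).eq]
    group

def PosConjugatesCommute.conjPowProdHom (hK : PosConjugatesCommute K t) (n : ℕ) : K →* H where
  toFun x := conjPowProd t n x
  map_one' := conjPowProd_one t n
  map_mul' x y := hK.conjPowProd_mul x.2 y.2 n

theorem PosConjugatesCommute.exists_pow_eq_commutator_mul_conjPowProd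
    (hK : PosConjugatesCommute K t) {g : H} (hg : g ∈ K) (n : ℕ) :
    ∃ a : H, g ^ n = ⁅a, t⁆ * conjPowProd t n g := by
  induction n with
  | zero => exact ⟨1, by simp [conjPowProd]⟩
  | succ n ih =>
    obtain ⟨a, ha⟩ := ih
    refine ⟨g ^ (n + 1) * (t * a * t⁻¹), ?_⟩
    have hc : ⁅a, t⁆ = g ^ n * (conjPowProd t n g)⁻¹ := eq_mul_inv_of_mul_eq ha.symm
    have hPg : Commute (g ^ n)⁻¹ (conjPowProd t n g)⁻¹ :=
      ((hK.commute_conjPowProd hg hg n).pow_left n).inv_inv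
    calc g ^ (n + 1)
        = g ^ (n + 1) * t * (g ^ n * (conjPowProd t n g)⁻¹ * (g ^ n)⁻¹ *
            conjPowProd t n g) * t⁻¹ := by rw [mul_assoc (g ^ n), ← hPg.eq]; group
      _ = ⁅g ^ (n + 1) * (t * a * t⁻¹), t⁆ * conjPowProd t (n + 1) g := by
          rw [← hc, conjPowProd, commutatorElement_def, commutatorElement_def]; group

theorem PosConjugatesCommute.scl_eq_zero (hK : PosConjugatesCommute K t) {g : H}
    (hg : g ∈ ⁅K, K⁆) : scl g = 0 := by
  rw [← K.map_subtype_commutator] at hg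
  obtain ⟨x, hx, rfl⟩ := hg
  obtain ⟨L, hL⟩ := exists_list_of_mem_commutator hx
  refine scl_eq_zero_of_commLength_pow_le (C := L.length + 1) fun n => ?_
  obtain ⟨a, ha⟩ := hK.exists_pow_eq_commutator_mul_conjPowProd x.2 n
  change commLength ((x : H) ^ n) ≤ _
  rw [ha, hL]
  exact commLength_commutator_mul_map_le (hK.conjPowProdHom n) a t L

end PosConjugates

section OrderedPerm

variable {α : Type*}

theorem Monotone.iterate_succ_lt [Preorder α] {f : α → α} (hf : Monotone f) {a b : α}
    (hab : a ≤ b) (hfb : f b < a) {x : α} (hx : x ≤ b) (n : ℕ) : f^[n + 1] x < a := by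
  induction n with
  | zero => exact (hf hx).trans_lt hfb
  | succ n ih =>
    rw [Function.iterate_succ_apply']
    exact (hf (ih.le.trans hab)).trans_lt hfb

/-- The supports of an element of `K` and of a positive `t`-conjugate of one are disjoint:
`t` pushes everything below `b` under `a`. -/
theorem posConjugatesCommute_fixingSubgroup [LinearOrder α] {G : Subgroup (Equiv.Perm α)}
    {a b : α} {t : G} (ht : Monotone (t : Equiv.Perm α)) (htb : (t : Equiv.Perm α) b < a) :
    PosConjugatesCommute (fixingSubgroup G (Set.Iic a ∪ Set.Ici b)) t := by
  intro x hx y hy k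
  refine Commute.of_map G.subtype_injective ?_
  simp only [map_mul, map_pow, map_inv, Subgroup.coe_subtype]
  refine Equiv.Perm.Disjoint.commute fun z => ?_
  by_cases hz : z ∈ Set.Iic a ∪ Set.Ici b
  · exact Or.inl ((mem_fixingSubgroup_iff G).1 hx z hz)
  right
  set T := (t : Equiv.Perm α) ^ (k + 1)
  have hw : T⁻¹ z ∈ Set.Iic a ∪ Set.Ici b := by
    by_contra hw
    simp only [Set.mem_union, Set.mem_Iic, Set.mem_Ici, not_or, not_le] at hz hw
    have := ht.iterate_succ_lt (hz.1.le.trans hz.2.le) htb hw.2.le k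
    rw [← Equiv.Perm.coe_pow, Equiv.Perm.coe_inv, Equiv.apply_symm_apply] at this
    exact lt_asymm this hz.1
  have hyw : (y : Equiv.Perm α) (T⁻¹ z) = T⁻¹ z := (mem_fixingSubgroup_iff G).1 hy _ hw
  simp only [Equiv.Perm.mul_apply, hyw]
  exact T.apply_symm_apply z

theorem smul_sInf_orbit [CompleteLattice α] {G : Subgroup (Equiv.Perm α)}
    (hmono : ∀ g ∈ G, Monotone g) (g : G) (p : α) :
    g • sInf (MulAction.orbit G p) = sInf (MulAction.orbit G p) := by
  let e : α ≃o α := Equiv.toOrderIso (g : Equiv.Perm α) (hmono g g.2) (hmono _ (inv_mem g.2))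
  calc g • sInf (MulAction.orbit G p) = e (sInf (MulAction.orbit G p)) := rfl
    _ = sInf (g • MulAction.orbit G p) := by rw [e.map_sInf, ← sInf_image, ← Set.image_smul]; rfl
    _ = sInf (MulAction.orbit G p) := by rw [MulAction.smul_orbit]

theorem exists_apply_lt_of_fixedPoints_subset [CompleteLinearOrder α]
    {G : Subgroup (Equiv.Perm α)} (hmono : ∀ g ∈ G, Monotone g)
    (hfix : {x : α | ∀ g ∈ G, g x = x} ⊆ {⊥, ⊤}) {p q : α} (hp : p < ⊤) (hq : ⊥ < q) :
    ∃ g ∈ G, g p < q := by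
  set c := sInf (MulAction.orbit G p)
  have hc : c ∈ ({⊥, ⊤} : Set α) := hfix fun g hg => smul_sInf_orbit hmono ⟨g, hg⟩ p
  have hcp : c ≤ p := sInf_le (MulAction.mem_orbit_self p)
  have hc0 : c = ⊥ := hc.resolve_right (hcp.trans_lt hp).ne
  rw [← hc0] at hq
  obtain ⟨_, ⟨g, rfl⟩, hgq⟩ := sInf_lt_iff.1 hq
  exact ⟨g, g.2, hgq⟩

end OrderedPerm

section Collars

open unitInterval

noncomputable def collarWidth (n : ℕ) : I :=
  ⟨1 / (n + 1), div_mem zero_le_one (by positivity) (by simp)⟩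

def collarFixer (G : Subgroup (Equiv.Perm I)) (n : ℕ) : Subgroup G :=
  fixingSubgroup G (Set.Iic (collarWidth n) ∪ Set.Ici (σ (collarWidth n)))

theorem collarWidth_anti : Antitone collarWidth := fun m n h => by
  change (1 / (n + 1) : ℝ) ≤ 1 / (m + 1)
  gcongr

theorem collarFixer_mono (G : Subgroup (Equiv.Perm I)) : Monotone (collarFixer G) :=
  fun _ _ h => fixingSubgroup_antitone G I <| Set.union_subset_union
    (Set.Iic_subset_Iic.2 (collarWidth_anti h))
    (Set.Ici_subset_Ici.2 (symm_le_symm.2 (collarWidth_anti h)))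

theorem fixesEndNbhds_le_iSup_collarFixer (G : Subgroup (Equiv.Perm I)) :
    fixesEndNbhds G ≤ ⨆ n, collarFixer G n := by
  rintro g ⟨δ, hδ, hg⟩
  obtain ⟨n, hn⟩ := exists_nat_one_div_lt hδ
  refine Subgroup.mem_iSup_of_mem n ((mem_fixingSubgroup_iff G).2 ?_)
  rintro x (hx | hx)
  · exact (hg x).1 (le_trans hx hn.le)
  · refine (hg x).2 ?_
    have : 1 - (1 / (n + 1) : ℝ) ≤ x := (coe_symm_eq (collarWidth n)).symm.trans_le hx
    linarith

theorem exists_apply_symm_collarWidth_lt {G : Subgroup (Equiv.Perm I)}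
    (hmono : ∀ g ∈ G, Monotone g) (hfix : {x : I | ∀ g ∈ G, g x = x} = {0, 1}) (n : ℕ) :
    ∃ t ∈ G, t (σ (collarWidth n)) < collarWidth n :=
  exists_apply_lt_of_fixedPoints_subset hmono hfix.subset
    (show 1 - (1 / (n + 1) : ℝ) < 1 by simp; positivity)
    (show (0 : ℝ) < 1 / (n + 1) by positivity)

end Collars

/-- Case 1 of Theorem A: if $G \le \mathrm{PL}^+(I)$ has $\mathrm{fix}(G) = \{0,1\}$,
then stable commutator length (computed in $G$) vanishes on $[G_0, G_0]$, where
$G_0$ consists of the elements fixing neighborhoods of the endpoints. -/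
theorem scl_vanishes_on_commutator_of_end_fixing_subgroup
    (G : Subgroup (Equiv.Perm unitInterval)) (hG : ∀ g ∈ G, IsPLplus g)
    (hfix : {x : unitInterval | ∀ g ∈ G, g x = x} = {0, 1})
    (g : G) (hg : g ∈ ⁅fixesEndNbhds G, fixesEndNbhds G⁆) :
    scl g = 0 := by
  have hG₀ := fixesEndNbhds_le_iSup_collarFixer G
  obtain ⟨n, hn⟩ := Subgroup.exists_mem_commutator_of_mem_commutator_iSup
    (collarFixer_mono G) (Subgroup.commutator_mono hG₀ hG₀ hg)
  have hmono : ∀ s ∈ G, Monotone s := fun s hs => (hG s hs).1.monotone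
  obtain ⟨t, htG, ht⟩ := exists_apply_symm_collarWidth_lt hmono hfix n
  exact (posConjugatesCommute_fixingSubgroup (t := ⟨t, htG⟩) (hmono t htG) ht).scl_eq_zero hn
end
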